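/- arXiv:2307.14545 — 3 statements merged into one kernel-verified Lean document; each statement's English description precedes it below -/
import Mathlib

section
/- Let p(x) = exp(−φ(x)) be a differentiable probability density on ℝ^d with finite positive-definite expected Hessian E[H_φ(x)], and let f: ℝ^d → ℝ be differentiable with E[∇f(x)] well-defined, such that f(x)p(x − θ) → 0 as ‖x‖ → ∞ for every fixed θ. Then Var(f(x)) ≥ (E[∇f(x)])^T (E[H_φ(x)])^{−1} (E[∇f(x)]). -/
open MeasureTheory Matrix

variable {d : ℕ}

/-- Partial derivative of `g : ℝ^d → ℝ` in the `i`-th coordinate direction. -/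
noncomputable def pd (g : EuclideanSpace ℝ (Fin d) → ℝ) (i : Fin d)
    (x : EuclideanSpace ℝ (Fin d)) : ℝ :=
  fderiv ℝ g x (EuclideanSpace.single i (1 : ℝ))

/-- The Hessian matrix of `g` at `x`, as a matrix of iterated partial derivatives. -/
noncomputable def hess (g : EuclideanSpace ℝ (Fin d) → ℝ)
    (x : EuclideanSpace ℝ (Fin d)) : Matrix (Fin d) (Fin d) ℝ :=
  Matrix.of fun i j => pd (pd g j) i x

/-!
Write `p = exp (-φ)` and, for a direction `u`, let `s = ∂ᵤφ` be the score, so that `∂ᵤp = -s p`.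
Integration by parts against `p` along `u` gives `E[f s] = E[∂ᵤf]`, `E[s] = 0` and the
Fisher identity `E[s²] = E[∂ᵤ²φ]`. Expanding `0 ≤ E[(f - E f - s)²]` then yields
`Var f ≥ 2 E[∂ᵤf] - E[∂ᵤ²φ] = 2 u ⬝ E[∇f] - u ⬝ E[H_φ] u`, and `u = E[H_φ]⁻¹ E[∇f]` gives the bound.

The integration by parts needs `s² p` to be integrable. This is obtained by first integrating by
parts against the bounded truncations `s / (1 + ε s²)`, which bounds
`∫ s² / (1 + ε s²) p` by `∫ |∂ᵤ²φ| p` uniformly in `ε`, and Fatou's lemma lets `ε → 0`.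
-/

open Filter Topology

theorem hasDerivAt_div_one_add_mul_sq {ε : ℝ} (hε : 0 ≤ ε) (t : ℝ) :
    HasDerivAt (fun t => t / (1 + ε * t ^ 2)) ((1 - ε * t ^ 2) / (1 + ε * t ^ 2) ^ 2) t := by
  have hpos : 0 < 1 + ε * t ^ 2 := by positivity
  refine ((hasDerivAt_id' t).fun_div (((hasDerivAt_pow 2 t).const_mul ε).const_add 1)
    hpos.ne').congr_deriv ?_
  ring

theorem abs_div_one_add_mul_sq_le {ε : ℝ} (hε0 : 0 < ε) (hε1 : ε ≤ 1) (t : ℝ) :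
    |t / (1 + ε * t ^ 2)| ≤ ε⁻¹ := by
  have hpos : 0 < 1 + ε * t ^ 2 := by positivity
  rw [abs_div, abs_of_pos hpos, div_le_iff₀ hpos, mul_add, inv_mul_cancel_left₀ hε0.ne', mul_one]
  nlinarith [one_le_inv_iff₀.2 ⟨hε0, hε1⟩, sq_abs t, abs_nonneg t, sq_nonneg (|t| - 1)]

theorem div_one_add_mul_sq_mul_self_le {ε : ℝ} (hε : 0 < ε) (t : ℝ) :
    t / (1 + ε * t ^ 2) * t ≤ ε⁻¹ := by
  have hpos : 0 < 1 + ε * t ^ 2 := by positivity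
  rw [div_mul_eq_mul_div, div_le_iff₀ hpos, mul_add, inv_mul_cancel_left₀ hε.ne']
  nlinarith [inv_pos.2 hε]

theorem abs_one_sub_mul_sq_div_le_one {ε : ℝ} (hε : 0 ≤ ε) (t : ℝ) :
    |(1 - ε * t ^ 2) / (1 + ε * t ^ 2) ^ 2| ≤ 1 := by
  have hpos : 0 < 1 + ε * t ^ 2 := by positivity
  have hsq : 0 ≤ ε * t ^ 2 := by positivity
  rw [abs_div, abs_of_pos (pow_pos hpos 2), div_le_one (pow_pos hpos 2), abs_le]
  constructor <;> nlinarith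

section Weighted

variable {α : Type*} [MeasurableSpace α] {ν : Measure α} {g h w : α → ℝ}

theorem integrable_of_tendsto_of_integral_le {F : ℕ → α → ℝ} {C : ℝ}
    (hF : ∀ n, Integrable (F n) ν) (hF0 : ∀ n x, 0 ≤ F n x)
    (hFg : ∀ x, Tendsto (fun n => F n x) atTop (𝓝 (g x))) (hC : ∀ n, ∫ x, F n x ∂ν ≤ C) :
    Integrable g ν := by
  refine ⟨aestronglyMeasurable_of_tendsto_ae atTop (fun n => (hF n).1) (ae_of_all _ hFg), ?_⟩
  have hbound : ∀ n, ∫⁻ x, ‖F n x‖ₑ ∂ν ≤ ENNReal.ofReal C := fun n => by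
    rw [← ofReal_integral_norm_eq_lintegral_enorm (hF n)]
    exact ENNReal.ofReal_le_ofReal (by simpa [abs_of_nonneg (hF0 n _)] using hC n)
  calc ∫⁻ x, ‖g x‖ₑ ∂ν = ∫⁻ x, liminf (fun n => ‖F n x‖ₑ) atTop ∂ν :=
        lintegral_congr fun x => ((hFg x).enorm.liminf_eq).symm
    _ ≤ liminf (fun n => ∫⁻ x, ‖F n x‖ₑ ∂ν) atTop :=
        lintegral_liminf_le' fun n => (hF n).1.aemeasurable.enorm
    _ ≤ ENNReal.ofReal C := liminf_le_of_frequently_le' (Frequently.of_forall hbound)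
    _ < ⊤ := ENNReal.ofReal_lt_top

theorem integrable_div_one_add_mul_sq_mul_self_mul {ε : ℝ} (hε : 0 < ε) (hg : Measurable g)
    (hw : Integrable w ν) : Integrable (fun x => g x / (1 + ε * g x ^ 2) * g x * w x) ν := by
  refine hw.bdd_mul (c := ε⁻¹) (by fun_prop : Measurable _).aestronglyMeasurable
    (ae_of_all _ fun x => ?_)
  have h0 : 0 ≤ g x / (1 + ε * g x ^ 2) * g x := by
    rw [div_mul_eq_mul_div, ← sq]
    positivity
  rw [Real.norm_of_nonneg h0]
  exact div_one_add_mul_sq_mul_self_le hε (g x)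

theorem integrable_mul_mul_of_integrable_sq_mul (hw : ∀ x, 0 ≤ w x)
    (hg : Integrable (fun x => g x ^ 2 * w x) ν) (hh : Integrable (fun x => h x ^ 2 * w x) ν)
    (hm : AEStronglyMeasurable (fun x => g x * h x * w x) ν) :
    Integrable (fun x => g x * h x * w x) ν := by
  refine ((hg.add hh).div_const 2).mono' hm (ae_of_all _ fun x => ?_)
  show _ ≤ (g x ^ 2 * w x + h x ^ 2 * w x) / 2
  rw [Real.norm_eq_abs, abs_mul, abs_mul, abs_of_nonneg (hw x)]
  have : |g x| * |h x| ≤ (g x ^ 2 + h x ^ 2) / 2 := by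
    nlinarith [sq_nonneg (|g x| - |h x|), sq_abs (g x), sq_abs (h x)]
  nlinarith [hw x]

theorem two_mul_integral_sub_le_integral_sq_sub_sq (hw : ∀ x, 0 ≤ w x) (hw1 : ∫ x, w x ∂ν = 1) (hgw : Integrable (fun x => g x * w x) ν)
    (hg2w : Integrable (fun x => g x ^ 2 * w x) ν) (hhw : Integrable (fun x => h x * w x) ν)
    (hh2w : Integrable (fun x => h x ^ 2 * w x) ν) (hghw : Integrable (fun x => g x * h x * w x) ν)
    (hh0 : ∫ x, h x * w x ∂ν = 0) :
    2 * ∫ x, g x * h x * w x ∂ν - ∫ x, h x ^ 2 * w x ∂ν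
      ≤ ∫ x, g x ^ 2 * w x ∂ν - (∫ x, g x * w x ∂ν) ^ 2 := by
  set m := ∫ x, g x * w x ∂ν
  have hwi : Integrable w ν := integrable_of_integral_eq_one hw1
  have h1 : Integrable (fun x => g x ^ 2 * w x - 2 * m * (g x * w x)) ν :=
    hg2w.sub (hgw.const_mul _)
  have h2 : Integrable (fun x => g x ^ 2 * w x - 2 * m * (g x * w x) + m ^ 2 * w x) ν :=
    h1.add (hwi.const_mul _)
  have h3 : Integrable (fun x => g x ^ 2 * w x - 2 * m * (g x * w x) + m ^ 2 * w x
      - 2 * (g x * h x * w x)) ν := h2.sub (hghw.const_mul _)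
  have h4 : Integrable (fun x => g x ^ 2 * w x - 2 * m * (g x * w x) + m ^ 2 * w x
      - 2 * (g x * h x * w x) + 2 * m * (h x * w x)) ν := h3.add (hhw.const_mul _)
  have hexpand : ∫ x, (g x - m - h x) ^ 2 * w x ∂ν
      = ∫ x, g x ^ 2 * w x ∂ν - 2 * m * m + m ^ 2 * ∫ x, w x ∂ν
        - 2 * ∫ x, g x * h x * w x ∂ν + 2 * m * ∫ x, h x * w x ∂ν + ∫ x, h x ^ 2 * w x ∂ν := by
    rw [integral_congr_ae (ae_of_all _ fun x => show (g x - m - h x) ^ 2 * w x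
        = g x ^ 2 * w x - 2 * m * (g x * w x) + m ^ 2 * w x - 2 * (g x * h x * w x)
          + 2 * m * (h x * w x) + h x ^ 2 * w x by ring),
      integral_add h4 hh2w, integral_add h3 (hhw.const_mul _), integral_sub h2 (hghw.const_mul _),
      integral_add h1 (hwi.const_mul _), integral_sub hg2w (hgw.const_mul _), integral_const_mul,
      integral_const_mul, integral_const_mul, integral_const_mul]
  have hnonneg : 0 ≤ ∫ x, (g x - m - h x) ^ 2 * w x ∂ν :=
    integral_nonneg fun x => mul_nonneg (sq_nonneg _) (hw x)
  rw [hexpand, hw1, hh0] at hnonneg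
  nlinarith

theorem integrable_dotProduct_mul {ι : Type*} [Fintype ι] (v : ι → ℝ) {F : α → ι → ℝ}
    (hF : ∀ i, Integrable (fun x => F x i * w x) ν) :
    Integrable (fun x => v ⬝ᵥ F x * w x) ν := by
  simp only [dotProduct, Finset.sum_mul, mul_assoc]
  exact integrable_finsetSum _ fun i _ => (hF i).const_mul (v i)

theorem integral_dotProduct_mul {ι : Type*} [Fintype ι] (v : ι → ℝ) {F : α → ι → ℝ}
    (hF : ∀ i, Integrable (fun x => F x i * w x) ν) :
    ∫ x, v ⬝ᵥ F x * w x ∂ν = v ⬝ᵥ fun i => ∫ x, F x i * w x ∂ν := by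
  simp only [dotProduct, Finset.sum_mul, mul_assoc]
  rw [integral_finsetSum _ fun i _ => (hF i).const_mul (v i)]
  simp only [integral_const_mul]

end Weighted

section Directional

variable {E : Type*} [NormedAddCommGroup E] [NormedSpace ℝ E] {φ : E → ℝ} {u : E}

theorem ContDiff.fderiv_apply_const {m n : WithTop ℕ∞} (hφ : ContDiff ℝ m φ) (hnm : n + 1 ≤ m)
    (u : E) : ContDiff ℝ n fun y => fderiv ℝ φ y u :=
  (hφ.fderiv_right hnm).clm_apply contDiff_const

theorem fderiv_exp_neg_apply {x : E} (hφ : DifferentiableAt ℝ φ x) (u : E) :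
    fderiv ℝ (fun y => Real.exp (-φ y)) x u = -(fderiv ℝ φ x u * Real.exp (-φ x)) := by
  rw [(hφ.hasFDerivAt.fun_neg.exp).fderiv]
  simp [mul_comm]

variable [FiniteDimensional ℝ E] [MeasurableSpace E] [BorelSpace E] {μ : Measure E}
  [μ.IsAddHaarMeasure]

theorem integral_mul_fderiv_mul_exp_neg {f : E → ℝ} (hφ : Differentiable ℝ φ)
    (hf : Differentiable ℝ f) (hfp : Integrable (fun x => f x * Real.exp (-φ x)) μ)
    (hf'p : Integrable (fun x => fderiv ℝ f x u * Real.exp (-φ x)) μ)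
    (hfsp : Integrable (fun x => f x * fderiv ℝ φ x u * Real.exp (-φ x)) μ) :
    ∫ x, f x * fderiv ℝ φ x u * Real.exp (-φ x) ∂μ
      = ∫ x, fderiv ℝ f x u * Real.exp (-φ x) ∂μ := by
  have key := integral_mul_fderiv_eq_neg_fderiv_mul_of_integrable (μ := μ) (v := u) hf'p
    (by simpa [fderiv_exp_neg_apply (hφ _), mul_assoc] using hfsp.neg) hfp
    (fun x _ => hf x) (fun x _ => (hφ x).neg.exp)
  simp only [fderiv_exp_neg_apply (hφ _), mul_neg, integral_neg, neg_inj] at key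
  simpa [mul_assoc] using key

theorem integral_div_one_add_mul_sq_mul_exp_neg_le (hφ : ContDiff ℝ 2 φ)
    (hp : Integrable (fun x => Real.exp (-φ x)) μ)
    (hs'p : Integrable (fun x => fderiv ℝ (fun y => fderiv ℝ φ y u) x u * Real.exp (-φ x)) μ)
    {ε : ℝ} (hε0 : 0 < ε) (hε1 : ε ≤ 1) :
    ∫ x, fderiv ℝ φ x u / (1 + ε * fderiv ℝ φ x u ^ 2) * fderiv ℝ φ x u * Real.exp (-φ x) ∂μ
      ≤ ∫ x, |fderiv ℝ (fun y => fderiv ℝ φ y u) x u * Real.exp (-φ x)| ∂μ := by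
  set s : E → ℝ := fun y => fderiv ℝ φ y u
  have hs : ContDiff ℝ 1 s := hφ.fderiv_apply_const (by norm_num) u
  have hθs : ∀ x, HasFDerivAt (fun y => s y / (1 + ε * s y ^ 2))
      (((1 - ε * s x ^ 2) / (1 + ε * s x ^ 2) ^ 2) • fderiv ℝ s x) x := fun x =>
    (hasDerivAt_div_one_add_mul_sq hε0.le (s x)).comp_hasFDerivAt x
      ((hs.differentiable one_ne_zero) x).hasFDerivAt
  have hθ : Continuous fun x => s x / (1 + ε * s x ^ 2) :=
    continuous_iff_continuousAt.2 fun x => (hθs x).continuousAt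
  have hθp : Integrable (fun x => s x / (1 + ε * s x ^ 2) * Real.exp (-φ x)) μ :=
    hp.bdd_mul hθ.aestronglyMeasurable
      (ae_of_all _ fun x => abs_div_one_add_mul_sq_le hε0 hε1 (s x))
  have hderiv : (fun x => fderiv ℝ (fun y => s y / (1 + ε * s y ^ 2)) x u * Real.exp (-φ x))
      = fun x => (1 - ε * s x ^ 2) / (1 + ε * s x ^ 2) ^ 2 * (fderiv ℝ s x u * Real.exp (-φ x)) :=
    funext fun x => by rw [(hθs x).fderiv]; simp [mul_assoc]
  have hθ'p : Integrable (fun x => (1 - ε * s x ^ 2) / (1 + ε * s x ^ 2) ^ 2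
      * (fderiv ℝ s x u * Real.exp (-φ x))) μ :=
    hs'p.bdd_mul (by fun_prop : Measurable fun x => (1 - ε * s x ^ 2) / (1 + ε * s x ^ 2) ^ 2
      ).aestronglyMeasurable (ae_of_all _ fun x => abs_one_sub_mul_sq_div_le_one hε0.le (s x))
  rw [integral_mul_fderiv_mul_exp_neg (hφ.differentiable two_ne_zero)
    (fun x => (hθs x).differentiableAt) hθp (hderiv ▸ hθ'p)
    (integrable_div_one_add_mul_sq_mul_self_mul hε0 hs.continuous.measurable hp), hderiv]
  refine integral_mono hθ'p hs'p.abs fun x => (le_abs_self _).trans ?_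
  rw [abs_mul]
  exact mul_le_of_le_one_left (abs_nonneg _) (abs_one_sub_mul_sq_div_le_one hε0.le _)

theorem integrable_fderiv_sq_mul_exp_neg (hφ : ContDiff ℝ 2 φ)
    (hp : Integrable (fun x => Real.exp (-φ x)) μ)
    (hs'p : Integrable (fun x => fderiv ℝ (fun y => fderiv ℝ φ y u) x u * Real.exp (-φ x)) μ) :
    Integrable (fun x => fderiv ℝ φ x u ^ 2 * Real.exp (-φ x)) μ := by
  have hε : ∀ n : ℕ, 0 < 1 / ((n : ℝ) + 1) ∧ 1 / ((n : ℝ) + 1) ≤ 1 := fun n =>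
    ⟨by positivity, by rw [div_le_one (by positivity)]; linarith [n.cast_nonneg (α := ℝ)]⟩
  have hs : Measurable fun y => fderiv ℝ φ y u :=
    (hφ.fderiv_apply_const (n := 1) (by norm_num) u).continuous.measurable
  refine integrable_of_tendsto_of_integral_le
    (fun n => integrable_div_one_add_mul_sq_mul_self_mul (hε n).1 hs hp) (fun n x => ?_)
    (fun x => ?_) (fun n => integral_div_one_add_mul_sq_mul_exp_neg_le hφ hp hs'p (hε n).1 (hε n).2)
  · rw [div_mul_eq_mul_div, ← sq]
    have := (hε n).1
    positivity
  · have hden :=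
      (tendsto_one_div_add_atTop_nhds_zero_nat.mul_const (fderiv ℝ φ x u ^ 2)).const_add 1
    convert (((tendsto_const_nhds (x := fderiv ℝ φ x u)).div hden (by simp)).mul_const
      (fderiv ℝ φ x u)).mul_const (Real.exp (-φ x)) using 2 <;> simp [sq]

theorem integrable_fderiv_mul_exp_neg (hφ : ContDiff ℝ 2 φ)
    (hp : Integrable (fun x => Real.exp (-φ x)) μ)
    (hs'p : Integrable (fun x => fderiv ℝ (fun y => fderiv ℝ φ y u) x u * Real.exp (-φ x)) μ) :
    Integrable (fun x => fderiv ℝ φ x u * Real.exp (-φ x)) μ := by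
  simpa using integrable_mul_mul_of_integrable_sq_mul (h := fun _ => 1)
    (fun x => (Real.exp_pos _).le) (integrable_fderiv_sq_mul_exp_neg hφ hp hs'p)
    (by simpa using hp)
    (((hφ.fderiv_apply_const (n := 1) (by norm_num) u).continuous.mul continuous_const).mul
      hφ.continuous.neg.rexp).aestronglyMeasurable

theorem integral_fderiv_sq_mul_exp_neg (hφ : ContDiff ℝ 2 φ)
    (hp : Integrable (fun x => Real.exp (-φ x)) μ)
    (hs'p : Integrable (fun x => fderiv ℝ (fun y => fderiv ℝ φ y u) x u * Real.exp (-φ x)) μ) :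
    ∫ x, fderiv ℝ φ x u ^ 2 * Real.exp (-φ x) ∂μ
      = ∫ x, fderiv ℝ (fun y => fderiv ℝ φ y u) x u * Real.exp (-φ x) ∂μ := by
  have hs2p := integrable_fderiv_sq_mul_exp_neg hφ hp hs'p
  simp_rw [sq] at hs2p ⊢
  exact integral_mul_fderiv_mul_exp_neg (hφ.differentiable two_ne_zero)
    ((hφ.fderiv_apply_const (n := 1) (by norm_num) u).differentiable one_ne_zero)
    (integrable_fderiv_mul_exp_neg hφ hp hs'p) hs'p hs2p

theorem two_mul_integral_fderiv_sub_le_variance {f : E → ℝ} (hφ : ContDiff ℝ 2 φ)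
    (hf : Differentiable ℝ f) (hp1 : ∫ x, Real.exp (-φ x) ∂μ = 1)
    (hs'p : Integrable (fun x => fderiv ℝ (fun y => fderiv ℝ φ y u) x u * Real.exp (-φ x)) μ)
    (hf'p : Integrable (fun x => fderiv ℝ f x u * Real.exp (-φ x)) μ)
    (hfp : Integrable (fun x => f x * Real.exp (-φ x)) μ)
    (hf2p : Integrable (fun x => f x ^ 2 * Real.exp (-φ x)) μ) :
    2 * ∫ x, fderiv ℝ f x u * Real.exp (-φ x) ∂μ
        - ∫ x, fderiv ℝ (fun y => fderiv ℝ φ y u) x u * Real.exp (-φ x) ∂μ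
      ≤ ∫ x, f x ^ 2 * Real.exp (-φ x) ∂μ - (∫ x, f x * Real.exp (-φ x) ∂μ) ^ 2 := by
  have hφd : Differentiable ℝ φ := hφ.differentiable two_ne_zero
  have hp : Integrable (fun x => Real.exp (-φ x)) μ := integrable_of_integral_eq_one hp1
  have hs2p := integrable_fderiv_sq_mul_exp_neg hφ hp hs'p
  have hsp := integrable_fderiv_mul_exp_neg hφ hp hs'p
  have hfsp : Integrable (fun x => f x * fderiv ℝ φ x u * Real.exp (-φ x)) μ :=
    integrable_mul_mul_of_integrable_sq_mul (fun x => (Real.exp_pos _).le) hf2p hs2p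
      ((hf.continuous.mul (hφ.fderiv_apply_const (n := 1) (by norm_num) u).continuous).mul
        hφ.continuous.neg.rexp).aestronglyMeasurable
  have hmean : ∫ x, fderiv ℝ φ x u * Real.exp (-φ x) ∂μ = 0 := by
    simpa using integral_mul_fderiv_mul_exp_neg (f := fun _ => 1) hφd (differentiable_const _)
      (by simpa using hp) (by simp) (by simpa using hsp)
  have hvar := two_mul_integral_sub_le_integral_sq_sub_sq (fun x => (Real.exp_pos _).le) hp1 hfp hf2p hsp hs2p hfsp hmean
  rwa [integral_mul_fderiv_mul_exp_neg hφd hf hfp hf'p hfsp,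
    integral_fderiv_sq_mul_exp_neg hφ hp hs'p] at hvar

end Directional

section Coordinates

theorem ContinuousLinearMap.apply_toLp_eq_sum {F : Type*} [NormedAddCommGroup F]
    [NormedSpace ℝ F] (L : EuclideanSpace ℝ (Fin d) →L[ℝ] F) (v : Fin d → ℝ) :
    L (WithLp.toLp 2 v) = ∑ i, v i • L (EuclideanSpace.single i 1) := by
  conv_lhs => rw [← (EuclideanSpace.basisFun (Fin d) ℝ).sum_repr (WithLp.toLp 2 v)]
  simp

theorem fderiv_toLp_eq_dotProduct (g : EuclideanSpace ℝ (Fin d) → ℝ)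
    (x : EuclideanSpace ℝ (Fin d)) (v : Fin d → ℝ) :
    fderiv ℝ g x (WithLp.toLp 2 v) = v ⬝ᵥ fun i => pd g i x := by
  simp [ContinuousLinearMap.apply_toLp_eq_sum, dotProduct, pd]

theorem fderiv_fderiv_toLp_eq_dotProduct_hess {φ : EuclideanSpace ℝ (Fin d) → ℝ}
    (hφ : ContDiff ℝ 2 φ) (x : EuclideanSpace ℝ (Fin d)) (v : Fin d → ℝ) :
    fderiv ℝ (fun y => fderiv ℝ φ y (WithLp.toLp 2 v)) x (WithLp.toLp 2 v)
      = v ⬝ᵥ (hess φ x *ᵥ v) := by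
  have h2 : ∀ w u, fderiv ℝ (fun y => fderiv ℝ φ y w) x u = fderiv ℝ (fderiv ℝ φ) x u w := by
    intro w u
    rw [fderiv_clm_apply ((hφ.fderiv_right (by norm_num)).differentiable one_ne_zero x)
      (differentiableAt_const w)]
    simp
  have hhess : ∀ i j, hess φ x i j
      = fderiv ℝ (fderiv ℝ φ) x (EuclideanSpace.single i 1) (EuclideanSpace.single j 1) :=
    fun i j => h2 _ _
  rw [h2, ContinuousLinearMap.apply_toLp_eq_sum, ContinuousLinearMap.apply_toLp_eq_sum]
  simp only [FunLike.coe_sum, Finset.sum_apply, FunLike.coe_smul, Pi.smul_apply, smul_eq_mul,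
    dotProduct, mulVec, hhess, Finset.mul_sum]
  exact Finset.sum_comm.trans
    (Finset.sum_congr rfl fun _ _ => Finset.sum_congr rfl fun _ _ => by ring)

variable {w : EuclideanSpace ℝ (Fin d) → ℝ}

theorem integral_fderiv_toLp_mul {g : EuclideanSpace ℝ (Fin d) → ℝ} (v : Fin d → ℝ)
    (hg : ∀ i, Integrable (fun x => pd g i x * w x)) :
    Integrable (fun x => fderiv ℝ g x (WithLp.toLp 2 v) * w x) ∧
      ∫ x, fderiv ℝ g x (WithLp.toLp 2 v) * w x = v ⬝ᵥ fun i => ∫ x, pd g i x * w x := by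
  simp only [fderiv_toLp_eq_dotProduct]
  exact ⟨integrable_dotProduct_mul v hg, integral_dotProduct_mul v hg⟩

theorem integral_fderiv_fderiv_toLp_mul {φ : EuclideanSpace ℝ (Fin d) → ℝ}
    (hφ : ContDiff ℝ 2 φ) (v : Fin d → ℝ) (hH : ∀ i j, Integrable (fun x => hess φ x i j * w x)) :
    Integrable (fun x => fderiv ℝ (fun y => fderiv ℝ φ y (WithLp.toLp 2 v)) x (WithLp.toLp 2 v)
      * w x) ∧
      ∫ x, fderiv ℝ (fun y => fderiv ℝ φ y (WithLp.toLp 2 v)) x (WithLp.toLp 2 v) * w x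
        = v ⬝ᵥ ((Matrix.of fun i j => ∫ x, hess φ x i j * w x) *ᵥ v) := by
  simp only [fderiv_fderiv_toLp_eq_dotProduct_hess hφ]
  have hrow : ∀ i x, (hess φ x *ᵥ v) i * w x = v ⬝ᵥ (fun j => hess φ x i j) * w x :=
    fun i x => by rw [mulVec, dotProduct_comm]
  have hrowi : ∀ i, Integrable (fun x => (hess φ x *ᵥ v) i * w x) := fun i => by
    simpa only [hrow] using integrable_dotProduct_mul v (hH i)
  refine ⟨integrable_dotProduct_mul v hrowi, ?_⟩
  rw [integral_dotProduct_mul v hrowi]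
  congr 1
  ext i
  simp only [hrow]
  rw [integral_dotProduct_mul v (hH i), mulVec, dotProduct_comm]
  rfl

end Coordinates

-- For singular `A`, `A⁻¹ = 0` and both sides vanish.
theorem inv_mulVec_dotProduct_mulVec_inv_mulVec {ι : Type*} [Fintype ι] [DecidableEq ι]
    (A : Matrix ι ι ℝ) (b : ι → ℝ) : (A⁻¹ *ᵥ b) ⬝ᵥ (A *ᵥ (A⁻¹ *ᵥ b)) = b ⬝ᵥ (A⁻¹ *ᵥ b) := by
  by_cases h : IsUnit A.det
  · rw [mulVec_mulVec, mul_nonsing_inv _ h, one_mulVec, dotProduct_comm]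
  · simp [nonsing_inv_apply_not_isUnit _ h]

theorem cramer_rao_variance_lower_bound_general
    (φ f : EuclideanSpace ℝ (Fin d) → ℝ)
    (p : EuclideanSpace ℝ (Fin d) → ℝ)
    (hp : ∀ x, p x = Real.exp (-φ x))
    (hφ : ContDiff ℝ 2 φ) (hf : Differentiable ℝ f)
    (hdens : ∫ x, p x = 1)
    (hHint : ∀ i j, Integrable (fun x => hess φ x i j * p x))
    (hgint : ∀ i, Integrable (fun x => pd f i x * p x))
    (hfint : Integrable (fun x => f x * p x))
    (hf2int : Integrable (fun x => f x ^ 2 * p x))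
    (EH : Matrix (Fin d) (Fin d) ℝ)
    (hEH : EH = Matrix.of fun i j => ∫ x, hess φ x i j * p x)
    (Eg : Fin d → ℝ) (hEg : ∀ i, Eg i = ∫ x, pd f i x * p x) :
    Eg ⬝ᵥ (EH⁻¹ *ᵥ Eg) ≤ (∫ x, f x ^ 2 * p x) - (∫ x, f x * p x) ^ 2 := by
  obtain rfl : p = fun x => Real.exp (-φ x) := funext hp
  beta_reduce at hdens hHint hgint hfint hf2int hEH hEg ⊢
  obtain ⟨hgradi, hgrad⟩ := integral_fderiv_toLp_mul (EH⁻¹ *ᵥ Eg) hgint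
  obtain ⟨hhessi, hhess⟩ := integral_fderiv_fderiv_toLp_mul hφ (EH⁻¹ *ᵥ Eg) hHint
  have key := two_mul_integral_fderiv_sub_le_variance hφ hf hdens hhessi hgradi hfint hf2int
  rw [hgrad, hhess, ← hEH, ← funext hEg, inv_mulVec_dotProduct_mulVec_inv_mulVec,
    dotProduct_comm] at key
  linarith

/-- Cramér–Rao / Brascamp–Lieb type bound.  Let `p = exp (−φ)` be a
differentiable probability density on `ℝ^d` with finite positive-definite expected Hessian
`E[H_φ]`, and let `f` be differentiable with `f(x) p(x − θ) → 0` as `‖x‖ → ∞` for each `θ`.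
Then `Var(f) ≥ (E ∇f)ᵀ (E H_φ)⁻¹ (E ∇f)`. -/
theorem cramer_rao_variance_lower_bound
    (φ f : EuclideanSpace ℝ (Fin d) → ℝ)
    (p : EuclideanSpace ℝ (Fin d) → ℝ)
    (hp : ∀ x, p x = Real.exp (-φ x))
    (hφ : ContDiff ℝ 2 φ) (hf : Differentiable ℝ f)
    (hdens : ∫ x, p x = 1)
    (hdecay : ∀ θ : EuclideanSpace ℝ (Fin d),
      Filter.Tendsto (fun x => f x * p (x - θ)) (Filter.cocompact _) (nhds 0))
    (hHint : ∀ i j, Integrable (fun x => hess φ x i j * p x))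
    (hgint : ∀ i, Integrable (fun x => pd f i x * p x))
    (hfint : Integrable (fun x => f x * p x))
    (hf2int : Integrable (fun x => f x ^ 2 * p x))
    (EH : Matrix (Fin d) (Fin d) ℝ)
    (hEH : EH = Matrix.of fun i j => ∫ x, hess φ x i j * p x)
    (hEHpd : EH.PosDef)
    (Eg : Fin d → ℝ) (hEg : ∀ i, Eg i = ∫ x, pd f i x * p x) :
    Eg ⬝ᵥ (EH⁻¹ *ᵥ Eg) ≤ (∫ x, f x ^ 2 * p x) - (∫ x, f x * p x) ^ 2 :=
  cramer_rao_variance_lower_bound_general φ f p hp hφ hf hdens hHint hgint hfint hf2int EH hEH Eg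
    hEg
end

section
/- Let A and B be random positive-definite d×d symmetric matrices, and define Var(M) = E‖M − EM‖_op². Suppose for some δ ∈ [0, 2^{−1/2}) that sqrt(Var(A)) < δ·λ_min(E A) and sqrt(Var(B)) < δ·λ_min(E B), where λ_min denotes the smallest eigenvalue. Then tr(E[AB]) ≥ (1 − δ²)·tr(E[A]·E[B]). -/
/-!
Write `X = A - EA`, `Y = B - EB`. Then `E tr(AB) = tr(EA EB) + E tr(XY)`, and pointwise
`-tr(XY) ≤ d ‖X‖ ‖Y‖ ≤ (d/2) (t ‖X‖² + t⁻¹ ‖Y‖²)` for every `t > 0`. Taking expectations with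
`t = λ_min(EB) / λ_min(EA)`, which balances the two variance terms, gives
`E tr(XY) ≥ -d δ² λ_min(EA) λ_min(EB)`. Finally
`tr(EA EB) ≥ λ_min(EA) tr(EB) ≥ d λ_min(EA) λ_min(EB)`, since `EA - λ_min(EA) • 1` and `EB` are
positive semidefinite and the trace of a product of positive semidefinite matrices is nonnegative.
-/


open Matrix MeasureTheory

/-- The `ℓ²`-operator norm of a real square matrix. -/
noncomputable def opNorm {d : ℕ} (M : Matrix (Fin d) (Fin d) ℝ) : ℝ :=
  ‖(Matrix.toEuclideanCLM (𝕜 := ℝ) (n := Fin d)) M‖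

/-- Entrywise expectation of a random matrix. -/
noncomputable def matExp {Ω : Type*} [MeasurableSpace Ω] (μ : Measure Ω) {d : ℕ}
    (A : Ω → Matrix (Fin d) (Fin d) ℝ) : Matrix (Fin d) (Fin d) ℝ :=
  Matrix.of fun i j => ∫ ω, A ω i j ∂μ

/-- `Var(M) = E‖M − EM‖_op²` for a random matrix `M`. -/
noncomputable def matVar {Ω : Type*} [MeasurableSpace Ω] (μ : Measure Ω) {d : ℕ}
    (A : Ω → Matrix (Fin d) (Fin d) ℝ) : ℝ :=
  ∫ ω, opNorm (A ω - matExp μ A) ^ 2 ∂μ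

/-- The minimal eigenvalue of a Hermitian matrix. -/
noncomputable def lambdaMin {d : ℕ} {M : Matrix (Fin d) (Fin d) ℝ}
    (hM : M.IsHermitian) : ℝ :=
  ⨅ i : Fin d, hM.eigenvalues i

namespace Matrix

lemma trace_mul_eq_sum {m n R : Type*} [Fintype m] [Fintype n] [NonUnitalNonAssocSemiring R]
    (M : Matrix m n R) (N : Matrix n m R) : (M * N).trace = ∑ i, ∑ j, M i j * N j i := by
  simp [trace, mul_apply]

open scoped MatrixOrder Matrix.Norms.L2Operator

variable {n : Type*} [Fintype n] [DecidableEq n]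

lemma abs_apply_le_l2_opNorm (M : Matrix n n ℝ) (i j : n) : |M i j| ≤ ‖M‖ := by
  have h := M.l2_opNorm_mulVec (EuclideanSpace.single j 1)
  rw [PiLp.norm_single, norm_one, mul_one] at h
  refine le_trans (le_of_eq ?_) ((PiLp.norm_apply_le _ i).trans h)
  simp

lemma abs_trace_mul_le (M N : Matrix n n ℝ) :
    |(M * N).trace| ≤ Fintype.card n * (‖M‖ * ‖N‖) :=
  calc |(M * N).trace| ≤ ∑ i, |(M * N) i i| := Finset.abs_sum_le_sum_abs _ _
    _ ≤ ∑ _i : n, ‖M‖ * ‖N‖ := Finset.sum_le_sum fun i _ =>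
        (abs_apply_le_l2_opNorm _ i i).trans (M.l2_opNorm_mul N)
    _ = Fintype.card n * (‖M‖ * ‖N‖) := by simp

lemma neg_trace_mul_le (M N : Matrix n n ℝ) {t : ℝ} (ht : 0 < t) :
    -(M * N).trace ≤ Fintype.card n / 2 * (t * ‖M‖ ^ 2 + t⁻¹ * ‖N‖ ^ 2) := by
  have amgm : 2 * (‖M‖ * ‖N‖) ≤ t * ‖M‖ ^ 2 + t⁻¹ * ‖N‖ ^ 2 := by
    have := mul_nonneg (inv_nonneg.2 ht.le) (sq_nonneg (t * ‖M‖ - ‖N‖))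
    field_simp at this ⊢
    nlinarith
  have hcard : (0 : ℝ) ≤ Fintype.card n / 2 := by positivity
  nlinarith [neg_abs_le (M * N).trace, abs_trace_mul_le M N, mul_le_mul_of_nonneg_left amgm hcard]

lemma PosSemidef.trace_mul_nonneg {P Q : Matrix n n ℝ} (hP : P.PosSemidef) (hQ : Q.PosSemidef) :
    0 ≤ (P * Q).trace := by
  obtain ⟨S, hS, rfl⟩ : ∃ S : Matrix n n ℝ, S.IsHermitian ∧ P = S * S :=
    ⟨CFC.sqrt P, (CFC.sqrt_nonneg P).posSemidef.isHermitian,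
      (CFC.sqrt_mul_sqrt_self P hP.nonneg).symm⟩
  rw [mul_assoc, trace_mul_comm, mul_assoc]
  simpa only [hS.eq, mul_assoc] using (hQ.mul_mul_conjTranspose_same S).trace_nonneg

lemma IsHermitian.smul_one_le_of_le_eigenvalues {M : Matrix n n ℝ} (hM : M.IsHermitian) {c : ℝ}
    (hc : ∀ i, c ≤ hM.eigenvalues i) : c • (1 : Matrix n n ℝ) ≤ M := by
  rw [← Algebra.algebraMap_eq_smul_one, algebraMap_le_iff_le_spectrum hM.isSelfAdjoint,
    hM.spectrum_real_eq_range_eigenvalues]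
  rintro _ ⟨i, rfl⟩
  exact hc i

lemma IsHermitian.card_mul_le_trace_of_le_eigenvalues {M : Matrix n n ℝ} (hM : M.IsHermitian)
    {c : ℝ} (hc : ∀ i, c ≤ hM.eigenvalues i) : Fintype.card n * c ≤ M.trace := by
  rw [hM.trace_eq_sum_eigenvalues]
  simpa using Finset.sum_le_sum fun i (_ : i ∈ Finset.univ) => hc i

lemma mul_trace_le_trace_mul_of_smul_one_le {P Q : Matrix n n ℝ} {c : ℝ} (hP : c • 1 ≤ P)
    (hQ : Q.PosSemidef) : c * Q.trace ≤ (P * Q).trace := by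
  have := PosSemidef.trace_mul_nonneg (Matrix.le_iff.1 hP) hQ
  rwa [sub_mul, trace_sub, smul_mul, one_mul, trace_smul, smul_eq_mul, sub_nonneg] at this

lemma lambdaMin_le_eigenvalues {d : ℕ} {M : Matrix (Fin d) (Fin d) ℝ} (hM : M.IsHermitian)
    (i : Fin d) : lambdaMin hM ≤ hM.eigenvalues i :=
  ciInf_le (Finite.bddBelow_range _) i

lemma PosSemidef.lambdaMin_nonneg {d : ℕ} {M : Matrix (Fin d) (Fin d) ℝ} (hM : M.PosSemidef) :
    0 ≤ lambdaMin hM.1 :=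
  Real.iInf_nonneg hM.eigenvalues_nonneg

theorem PosSemidef.card_mul_lambdaMin_mul_lambdaMin_le_trace_mul {d : ℕ}
    {P Q : Matrix (Fin d) (Fin d) ℝ} (hP : P.PosSemidef) (hQ : Q.PosSemidef) :
    d * lambdaMin hP.1 * lambdaMin hQ.1 ≤ (P * Q).trace :=
  calc d * lambdaMin hP.1 * lambdaMin hQ.1 = lambdaMin hP.1 * (d * lambdaMin hQ.1) := by ring
    _ ≤ lambdaMin hP.1 * Q.trace := by
      gcongr
      · exact hP.lambdaMin_nonneg
      · simpa using hQ.1.card_mul_le_trace_of_le_eigenvalues (lambdaMin_le_eigenvalues hQ.1)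
    _ ≤ (P * Q).trace :=
      mul_trace_le_trace_mul_of_smul_one_le
        (hP.1.smul_one_le_of_le_eigenvalues (lambdaMin_le_eigenvalues hP.1)) hQ

end Matrix

section RandomMatrix

variable {Ω : Type*} [MeasurableSpace Ω] {μ : Measure Ω} {d : ℕ}
  {A B : Ω → Matrix (Fin d) (Fin d) ℝ}

open scoped Matrix.Norms.L2Operator in
lemma opNorm_eq_l2_opNorm (M : Matrix (Fin d) (Fin d) ℝ) : opNorm M = ‖M‖ := rfl

lemma integrable_trace_mul_right (hA : ∀ i j, Integrable (fun ω => A ω i j) μ)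
    (M : Matrix (Fin d) (Fin d) ℝ) : Integrable (fun ω => (A ω * M).trace) μ := by
  simp only [trace_mul_eq_sum]
  exact integrable_finsetSum _ fun i _ => integrable_finsetSum _ fun j _ => (hA i j).mul_const _

lemma integral_trace_mul_right (hA : ∀ i j, Integrable (fun ω => A ω i j) μ)
    (M : Matrix (Fin d) (Fin d) ℝ) : ∫ ω, (A ω * M).trace ∂μ = (matExp μ A * M).trace := by
  simp only [trace_mul_eq_sum]
  rw [integral_finsetSum _ fun i _ =>
    integrable_finsetSum _ fun j _ => (hA i j).mul_const _]
  refine Finset.sum_congr rfl fun i _ => ?_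
  rw [integral_finsetSum _ fun j _ => (hA i j).mul_const _]
  simp [integral_mul_const, matExp]

lemma integrable_trace_mul_left (hA : ∀ i j, Integrable (fun ω => A ω i j) μ)
    (M : Matrix (Fin d) (Fin d) ℝ) : Integrable (fun ω => (M * A ω).trace) μ := by
  simpa only [trace_mul_comm M] using integrable_trace_mul_right hA M

lemma integral_trace_mul_left (hA : ∀ i j, Integrable (fun ω => A ω i j) μ)
    (M : Matrix (Fin d) (Fin d) ℝ) : ∫ ω, (M * A ω).trace ∂μ = (M * matExp μ A).trace := by
  simpa only [trace_mul_comm M] using integral_trace_mul_right hA M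

lemma matExp_isHermitian (hA : ∀ ω, (A ω).IsHermitian) : (matExp μ A).IsHermitian := by
  ext i j
  simp only [conjTranspose_apply, star_trivial, matExp, of_apply]
  exact integral_congr_ae (Filter.Eventually.of_forall fun ω => (hA ω).apply i j)

lemma matExp_posSemidef (hA : ∀ ω, (A ω).PosSemidef)
    (hAm : ∀ i j, Integrable (fun ω => A ω i j) μ) : (matExp μ A).PosSemidef := by
  refine .of_dotProduct_mulVec_nonneg (matExp_isHermitian fun ω => (hA ω).1) fun x => ?_
  have quadratic_form_eq_trace (M : Matrix (Fin d) (Fin d) ℝ) :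
      star x ⬝ᵥ (M *ᵥ x) = (M * vecMulVec x (star x)).trace := by
    rw [mul_vecMulVec, trace_vecMulVec, dotProduct_comm]
  rw [quadratic_form_eq_trace, ← integral_trace_mul_right hAm]
  refine integral_nonneg fun ω => ?_
  dsimp only [Pi.zero_apply]
  simpa only [quadratic_form_eq_trace] using (hA ω).dotProduct_mulVec_nonneg x

theorem trace_matExp_mul_sub_le_integral_trace_mul [IsProbabilityMeasure μ]
    (hAm : ∀ i j, Integrable (fun ω => A ω i j) μ)
    (hBm : ∀ i j, Integrable (fun ω => B ω i j) μ)
    (hABint : Integrable (fun ω => (A ω * B ω).trace) μ)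
    (hA2 : Integrable (fun ω => opNorm (A ω - matExp μ A) ^ 2) μ)
    (hB2 : Integrable (fun ω => opNorm (B ω - matExp μ B) ^ 2) μ) {t : ℝ} (ht : 0 < t) :
    (matExp μ A * matExp μ B).trace - d / 2 * (t * matVar μ A + t⁻¹ * matVar μ B)
      ≤ ∫ ω, (A ω * B ω).trace ∂μ := by
  set EA := matExp μ A
  set EB := matExp μ B
  let lower ω := (EA * B ω).trace + (A ω * EB).trace - (EA * EB).trace
    - d / 2 * (t * opNorm (A ω - EA) ^ 2 + t⁻¹ * opNorm (B ω - EB) ^ 2)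
  have hvar : Integrable (fun ω => t * opNorm (A ω - EA) ^ 2 + t⁻¹ * opNorm (B ω - EB) ^ 2) μ :=
    (hA2.const_mul t).add (hB2.const_mul t⁻¹)
  have hEB := integrable_trace_mul_left hBm EA
  have hEA := integrable_trace_mul_right hAm EB
  have hlin : Integrable (fun ω => (EA * B ω).trace + (A ω * EB).trace) μ := hEB.add hEA
  have hlin' : Integrable (fun ω => (EA * B ω).trace + (A ω * EB).trace - (EA * EB).trace) μ :=
    hlin.sub (integrable_const _)
  have integral_lower : ∫ ω, lower ω ∂μ
      = (EA * EB).trace - d / 2 * (t * matVar μ A + t⁻¹ * matVar μ B) := by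
    simp only [lower]
    rw [integral_sub hlin' (hvar.const_mul _), integral_sub hlin (integrable_const _),
      integral_add hEB hEA, integral_const_mul, integral_add (hA2.const_mul t) (hB2.const_mul t⁻¹),
      integral_const_mul, integral_const_mul, integral_trace_mul_left hBm,
      integral_trace_mul_right hAm, integral_const, probReal_univ, one_smul]
    simp only [matVar, EA, EB]
    ring
  rw [← integral_lower]
  refine integral_mono (hlin'.sub (hvar.const_mul _)) hABint fun ω => ?_
  have centered := neg_trace_mul_le (A ω - EA) (B ω - EB) ht
  simp only [Fintype.card_fin, sub_mul, mul_sub, trace_sub] at centered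
  simp only [lower, opNorm_eq_l2_opNorm]
  linarith

end RandomMatrix

theorem trace_exp_mul_ge_of_low_skew_general
    {Ω : Type*} [MeasurableSpace Ω] (μ : Measure Ω) [IsProbabilityMeasure μ]
    {d : ℕ} (A B : Ω → Matrix (Fin d) (Fin d) ℝ)
    (hApd : ∀ ω, (A ω).PosDef) (hBpd : ∀ ω, (B ω).PosDef)
    (hAm : ∀ i j, Integrable (fun ω => A ω i j) μ)
    (hBm : ∀ i j, Integrable (fun ω => B ω i j) μ)
    (hABint : Integrable (fun ω => (A ω * B ω).trace) μ)
    (hA2 : Integrable (fun ω => opNorm (A ω - matExp μ A) ^ 2) μ)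
    (hB2 : Integrable (fun ω => opNorm (B ω - matExp μ B) ^ 2) μ)
    (hEA : (matExp μ A).IsHermitian) (hEB : (matExp μ B).IsHermitian)
    (δ : ℝ)
    (hA : Real.sqrt (matVar μ A) < δ * lambdaMin hEA)
    (hB : Real.sqrt (matVar μ B) < δ * lambdaMin hEB) :
    (1 - δ ^ 2) * (matExp μ A * matExp μ B).trace ≤ ∫ ω, (A ω * B ω).trace ∂μ := by
  have hPA := matExp_posSemidef (fun ω => (hApd ω).posSemidef) hAm
  have hPB := matExp_posSemidef (fun ω => (hBpd ω).posSemidef) hBm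
  set a := lambdaMin hEA
  set b := lambdaMin hEB
  have hδa : 0 < δ * a := (Real.sqrt_nonneg _).trans_lt hA
  have hδb : 0 < δ * b := (Real.sqrt_nonneg _).trans_lt hB
  have hδ : 0 < δ := pos_of_mul_pos_left hδa hPA.lambdaMin_nonneg
  have ha : 0 < a := pos_of_mul_pos_right hδa hδ.le
  have hb : 0 < b := pos_of_mul_pos_right hδb hδ.le
  have hVA : matVar μ A < (δ * a) ^ 2 := (Real.sqrt_lt' hδa).1 hA
  have hVB : matVar μ B < (δ * b) ^ 2 := (Real.sqrt_lt' hδb).1 hB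
  have hab : d * a * b ≤ (matExp μ A * matExp μ B).trace :=
    hPA.card_mul_lambdaMin_mul_lambdaMin_le_trace_mul hPB
  have hvarA : b / a * matVar μ A ≤ δ ^ 2 * (a * b) :=
    calc b / a * matVar μ A ≤ b / a * (δ * a) ^ 2 := by gcongr
      _ = δ ^ 2 * (a * b) := by field_simp
  have hvarB : (b / a)⁻¹ * matVar μ B ≤ δ ^ 2 * (a * b) :=
    calc (b / a)⁻¹ * matVar μ B ≤ a / b * (δ * b) ^ 2 := by rw [inv_div]; gcongr
      _ = δ ^ 2 * (a * b) := by field_simp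
  calc (1 - δ ^ 2) * (matExp μ A * matExp μ B).trace
      ≤ (matExp μ A * matExp μ B).trace
          - d / 2 * (b / a * matVar μ A + (b / a)⁻¹ * matVar μ B) := by
        nlinarith [mul_le_mul_of_nonneg_left hab (sq_nonneg δ)]
    _ ≤ ∫ ω, (A ω * B ω).trace ∂μ :=
      trace_matExp_mul_sub_le_integral_trace_mul hAm hBm hABint hA2 hB2 (div_pos hb ha)

/-- If `√Var(A) < δ λ_min(EA)` and `√Var(B) < δ λ_min(EB)` for some
`δ ∈ [0, 2^{-1/2})`, where `A, B` are random positive-definite symmetric matrices, then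
`tr (E[AB]) ≥ (1 − δ²) tr (E[A] E[B])`. -/
theorem trace_exp_mul_ge_of_low_skew
    {Ω : Type*} [MeasurableSpace Ω] (μ : Measure Ω) [IsProbabilityMeasure μ]
    {d : ℕ} (A B : Ω → Matrix (Fin d) (Fin d) ℝ)
    (hApd : ∀ ω, (A ω).PosDef) (hBpd : ∀ ω, (B ω).PosDef)
    (hAm : ∀ i j, Integrable (fun ω => A ω i j) μ)
    (hBm : ∀ i j, Integrable (fun ω => B ω i j) μ)
    (hABint : Integrable (fun ω => (A ω * B ω).trace) μ)
    (hA2 : Integrable (fun ω => opNorm (A ω - matExp μ A) ^ 2) μ)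
    (hB2 : Integrable (fun ω => opNorm (B ω - matExp μ B) ^ 2) μ)
    (hEA : (matExp μ A).IsHermitian) (hEB : (matExp μ B).IsHermitian)
    (δ : ℝ) (hδ0 : 0 ≤ δ) (hδ1 : δ < (Real.sqrt 2)⁻¹)
    (hA : Real.sqrt (matVar μ A) < δ * lambdaMin hEA)
    (hB : Real.sqrt (matVar μ B) < δ * lambdaMin hEB) :
    (1 - δ ^ 2) * (matExp μ A * matExp μ B).trace ≤ ∫ ω, (A ω * B ω).trace ∂μ :=
  trace_exp_mul_ge_of_low_skew_general μ A B hApd hBpd hAm hBm hABint hA2 hB2 hEA hEB δ hA hB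
end

section
/- For the model y | θ ~ Normal(θ, 1) with prior θ ~ Normal(0, σ_p), where y_rep is an independent replication given θ, the conditional mutual information is I(θ, y_rep | y) = (1/2)·log((2σ_p² + 1)/(σ_p² + 1)). This quantity is strictly increasing in σ_p, tends to 0 as σ_p → 0, and tends to (1/2)·log 2 as σ_p → ∞. -/
open MeasureTheory Real

/-- The normal density with mean `m` and standard deviation `s`. -/
noncomputable def gpdf (m s x : ℝ) : ℝ :=
  (s * Real.sqrt (2 * π))⁻¹ * Real.exp (-(x - m) ^ 2 / (2 * s ^ 2))

/-- Joint density of `(θ, y, y_rep)` in the model `y, y_rep | θ ~ iid Normal(θ,1)`,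
`θ ~ Normal(0, σ_p)`. -/
noncomputable def jd11 (σp θ y yr : ℝ) : ℝ :=
  gpdf 0 σp θ * gpdf θ 1 y * gpdf θ 1 yr

/-- The conditional mutual information `I(θ, y_rep | y)` for this model. -/
noncomputable def cmi11 (σp : ℝ) : ℝ :=
  ∫ θ : ℝ, ∫ y : ℝ, ∫ yr : ℝ,
    jd11 σp θ y yr *
      Real.log (jd11 σp θ y yr * (∫ t : ℝ, gpdf 0 σp t * gpdf t 1 y) /
        (gpdf 0 σp θ * gpdf θ 1 y * (∫ t : ℝ, jd11 σp t y yr)))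

/-! By Gaussian conjugacy the marginal density of `y` and the joint density of `(y, y_rep)` are
again Gaussian, and the ratio inside the logarithm collapses to `p(y_rep | θ) / p(y_rep | y)`, a
likelihood over a posterior predictive density. Its logarithm is a quadratic polynomial in
`(θ, y, y_rep)`, so the triple integral only involves first and second Gaussian moments: the
quadratic terms contribute `-1/2 + 1/2`, leaving half the log-ratio of the predictive variance
`(2σ_p² + 1)/(σ_p² + 1)` to the sampling variance `1`. -/

open ProbabilityTheory
open scoped NNReal

lemma integral_quadratic_gaussianReal (m : ℝ) (v : ℝ≥0) (a b c : ℝ) :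
    ∫ x, a * (x - m) ^ 2 + b * (x - m) + c ∂gaussianReal m v = a * v + c := by
  have hid : Integrable (fun x : ℝ => x) (gaussianReal m v) :=
    memLp_one_iff_integrable.1 (memLp_id_gaussianReal 1)
  have hsq : Integrable (fun x => (x - m) ^ 2) (gaussianReal m v) :=
    ((memLp_id_gaussianReal 2).sub (memLp_const m)).integrable_sq
  have hlin : Integrable (fun x => x - m) (gaussianReal m v) := hid.sub (integrable_const m)
  have hvar : ∫ x, (x - m) ^ 2 ∂gaussianReal m v = v := by
    simpa [integral_id_gaussianReal] using
      (variance_eq_integral measurable_id.aemeasurable (μ := gaussianReal m v)).symm.trans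
        variance_id_gaussianReal
  have hmean : ∫ x, (x - m) ∂gaussianReal m v = 0 := by
    rw [integral_sub hid (integrable_const m), integral_id_gaussianReal]
    simp
  have hquad : Integrable (fun x => a * (x - m) ^ 2 + b * (x - m)) (gaussianReal m v) :=
    (hsq.const_mul a).add (hlin.const_mul b)
  rw [integral_add hquad (integrable_const c),
    integral_add (hsq.const_mul a) (hlin.const_mul b), integral_const_mul, integral_const_mul,
    hvar, hmean]
  simp

lemma gpdf_eq_gaussianPDFReal (m : ℝ) {s : ℝ} (hs : 0 < s) :
    gpdf m s = gaussianPDFReal m (s ^ 2).toNNReal := by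
  ext x
  rw [gaussianPDFReal, Real.coe_toNNReal _ (sq_nonneg s), gpdf,
    show 2 * π * s ^ 2 = s ^ 2 * (2 * π) by ring, Real.sqrt_mul (sq_nonneg s), Real.sqrt_sq hs.le]

lemma integral_gpdf_mul (m : ℝ) {s : ℝ} (hs : 0 < s) (f : ℝ → ℝ) :
    ∫ x, gpdf m s x * f x = ∫ x, f x ∂gaussianReal m (s ^ 2).toNNReal := by
  rw [integral_gaussianReal_eq_integral_smul (by simpa using hs.ne'), gpdf_eq_gaussianPDFReal m hs]
  rfl

lemma integral_gpdf_mul_quadratic (m : ℝ) {s : ℝ} (hs : 0 < s) (a b c : ℝ) {f : ℝ → ℝ}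
    (hf : ∀ x, f x = a * (x - m) ^ 2 + b * (x - m) + c) :
    ∫ x, gpdf m s x * f x = a * s ^ 2 + c := by
  simp only [integral_gpdf_mul m hs, hf, integral_quadratic_gaussianReal,
    Real.coe_toNNReal _ (sq_nonneg s)]

lemma integral_gpdf (m : ℝ) {s : ℝ} (hs : 0 < s) : ∫ x, gpdf m s x = 1 := by
  simpa using integral_gpdf_mul_quadratic m hs 0 0 1 (f := fun _ => 1) (fun _ => by ring)

lemma gpdf_pos (m : ℝ) {s : ℝ} (hs : 0 < s) (x : ℝ) : 0 < gpdf m s x := by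
  unfold gpdf
  positivity

lemma log_gpdf_div_gpdf {m m' s s' : ℝ} (hs : 0 < s) (hs' : 0 < s') (x : ℝ) :
    log (gpdf m s x / gpdf m' s' x) =
      log (s' / s) - (x - m) ^ 2 / (2 * s ^ 2) + (x - m') ^ 2 / (2 * s' ^ 2) := by
  have h2pi : 0 < √(2 * π) := sqrt_pos.2 (by positivity)
  rw [log_div (gpdf_pos m hs x).ne' (gpdf_pos m' hs' x).ne', gpdf, gpdf,
    log_mul (by positivity) (exp_pos _).ne', log_mul (by positivity) (exp_pos _).ne',
    log_exp, log_exp, log_inv, log_inv, log_mul hs.ne' h2pi.ne', log_mul hs'.ne' h2pi.ne',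
    log_div hs'.ne' hs.ne']
  ring

/-- For `t ~ Normal(m, s²)` and `x | t ~ Normal(t, r²)`, the law of `t` given `x` is
`Normal(posteriorMean m s r x, posteriorSd s r ^ 2)`. -/
noncomputable def posteriorMean (m s r x : ℝ) : ℝ := (r ^ 2 * m + s ^ 2 * x) / (s ^ 2 + r ^ 2)

noncomputable def posteriorSd (s r : ℝ) : ℝ := s * r / √(s ^ 2 + r ^ 2)

lemma posteriorSd_pos {s r : ℝ} (hs : 0 < s) (hr : 0 < r) : 0 < posteriorSd s r := by
  unfold posteriorSd
  positivity

lemma gpdf_mul_gpdf (m : ℝ) {s r : ℝ} (hs : 0 < s) (hr : 0 < r) (t x : ℝ) :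
    gpdf m s t * gpdf t r x =
      gpdf m √(s ^ 2 + r ^ 2) x * gpdf (posteriorMean m s r x) (posteriorSd s r) t := by
  have hq : 0 < s ^ 2 + r ^ 2 := by positivity
  have hsqrt : √(s ^ 2 + r ^ 2) ^ 2 = s ^ 2 + r ^ 2 := sq_sqrt hq.le
  have hsqrt_pos : 0 < √(s ^ 2 + r ^ 2) := sqrt_pos.2 hq
  have h2pi : 0 < √(2 * π) := sqrt_pos.2 (by positivity)
  simp only [gpdf, posteriorMean, posteriorSd, mul_mul_mul_comm _ (exp _), ← exp_add]
  congr 1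
  · field_simp
  · congr 1
    rw [div_pow, hsqrt]
    field_simp
    ring

lemma integral_gpdf_mul_gpdf (m : ℝ) {s r : ℝ} (hs : 0 < s) (hr : 0 < r) (x : ℝ) :
    ∫ t, gpdf m s t * gpdf t r x = gpdf m √(s ^ 2 + r ^ 2) x := by
  simp only [gpdf_mul_gpdf m hs hr, integral_const_mul,
    integral_gpdf _ (posteriorSd_pos hs hr), mul_one]

lemma integral_gpdf_mul_gpdf_mul_gpdf (m : ℝ) {s r : ℝ} (hs : 0 < s) (hr : 0 < r) (x x' : ℝ) :
    ∫ t, gpdf m s t * gpdf t r x * gpdf t r x' =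
      gpdf m √(s ^ 2 + r ^ 2) x *
        gpdf (posteriorMean m s r x) √(posteriorSd s r ^ 2 + r ^ 2) x' := by
  simp only [gpdf_mul_gpdf m hs hr, mul_assoc, integral_const_mul,
    integral_gpdf_mul_gpdf _ (posteriorSd_pos hs hr) hr]

lemma integral_jd11_mul_quadratic {σ : ℝ} (hσ : 0 < σ) (c w K : ℝ) :
    ∫ θ, ∫ y, ∫ yr, jd11 σ θ y yr * (K - (yr - θ) ^ 2 / 2 + (yr - c * y) ^ 2 / (2 * w)) =
      K - 1 / 2 + (1 + c ^ 2 + (1 - c) ^ 2 * σ ^ 2) / (2 * w) := by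
  simp only [jd11, mul_assoc, integral_const_mul]
  have h_yr : ∀ θ y,
      ∫ yr, gpdf θ 1 yr * (K - (yr - θ) ^ 2 / 2 + (yr - c * y) ^ 2 / (2 * w)) =
        K - 1 / 2 + (1 + (θ - c * y) ^ 2) / (2 * w) := fun θ y => by
    rw [integral_gpdf_mul_quadratic θ one_pos (1 / (2 * w) - 1 / 2) ((θ - c * y) / w)
      (K + (θ - c * y) ^ 2 / (2 * w)) fun yr => by ring]
    ring
  have h_y : ∀ θ, ∫ y, gpdf θ 1 y * (K - 1 / 2 + (1 + (θ - c * y) ^ 2) / (2 * w)) =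
      K - 1 / 2 + (1 + c ^ 2 + (1 - c) ^ 2 * θ ^ 2) / (2 * w) := fun θ => by
    rw [integral_gpdf_mul_quadratic θ one_pos (c ^ 2 / (2 * w)) (-(c * (1 - c) * θ) / w)
      (K - 1 / 2 + (1 + (1 - c) ^ 2 * θ ^ 2) / (2 * w)) fun y => by ring]
    ring
  simp only [h_yr, h_y]
  rw [integral_gpdf_mul_quadratic 0 hσ ((1 - c) ^ 2 / (2 * w)) 0
    (K - 1 / 2 + (1 + c ^ 2) / (2 * w)) fun θ => by ring]
  ring

lemma cmi11_log_arg_eq {σ : ℝ} (hσ : 0 < σ) (θ y yr : ℝ) :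
    jd11 σ θ y yr * (∫ t, gpdf 0 σ t * gpdf t 1 y) /
        (gpdf 0 σ θ * gpdf θ 1 y * ∫ t, jd11 σ t y yr) =
      gpdf θ 1 yr / gpdf (posteriorMean 0 σ 1 y) √(posteriorSd σ 1 ^ 2 + 1 ^ 2) yr := by
  have hmarg := gpdf_pos 0 (sqrt_pos.2 (by positivity : (0:ℝ) < σ ^ 2 + 1)) y
  have hprior := gpdf_pos 0 hσ θ
  have hlik := gpdf_pos θ one_pos y
  simp only [jd11]
  rw [integral_gpdf_mul_gpdf 0 hσ one_pos, integral_gpdf_mul_gpdf_mul_gpdf 0 hσ one_pos]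
  field_simp

lemma cmi11_eq {σ : ℝ} (hσ : 0 < σ) :
    cmi11 σ = (1 / 2) * log ((2 * σ ^ 2 + 1) / (σ ^ 2 + 1)) := by
  set w := (2 * σ ^ 2 + 1) / (σ ^ 2 + 1) with hw_def
  have hw : 0 < w := by positivity
  have hpred_var : posteriorSd σ 1 ^ 2 + 1 ^ 2 = w := by
    rw [posteriorSd, div_pow, sq_sqrt (by positivity), hw_def]
    field_simp
    ring
  have hpost_mean : ∀ y, posteriorMean 0 σ 1 y = σ ^ 2 / (σ ^ 2 + 1) * y := fun y => by
    rw [posteriorMean]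
    ring
  have hsecond_moment :
      1 + (σ ^ 2 / (σ ^ 2 + 1)) ^ 2 + (1 - σ ^ 2 / (σ ^ 2 + 1)) ^ 2 * σ ^ 2 = w := by
    rw [hw_def]
    field_simp
    ring
  have hlog : ∀ θ y yr : ℝ,
      log (gpdf θ 1 yr / gpdf (posteriorMean 0 σ 1 y) √(posteriorSd σ 1 ^ 2 + 1 ^ 2) yr) =
        log √w - (yr - θ) ^ 2 / 2 + (yr - σ ^ 2 / (σ ^ 2 + 1) * y) ^ 2 / (2 * w) := by
    intro θ y yr
    rw [hpred_var, hpost_mean, log_gpdf_div_gpdf one_pos (sqrt_pos.2 hw), sq_sqrt hw.le, div_one]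
    ring
  simp only [cmi11, cmi11_log_arg_eq hσ, hlog, integral_jd11_mul_quadratic hσ]
  rw [log_sqrt hw.le, hsecond_moment]
  field_simp
  ring

lemma strictMonoOn_half_log_ratio :
    StrictMonoOn (fun s : ℝ => (1 / 2) * Real.log ((2 * s ^ 2 + 1) / (s ^ 2 + 1)))
      (Set.Ioi 0) := by
  have hratio : StrictMonoOn (fun s : ℝ => (2 * s ^ 2 + 1) / (s ^ 2 + 1)) (Set.Ioi 0) := by
    intro s hs t ht hst
    rw [div_lt_div_iff₀ (by positivity) (by positivity)]
    nlinarith [mul_pos (sub_pos.2 hst) (add_pos (Set.mem_Ioi.1 hs) (Set.mem_Ioi.1 ht))]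
  have hlog := strictMonoOn_log.comp hratio fun s _ => Set.mem_Ioi.2 (by positivity)
  intro s hs t ht hst
  have := hlog hs ht hst
  simp only [Function.comp_apply] at this ⊢
  linarith

lemma tendsto_half_log_ratio_nhdsGT_zero :
    Filter.Tendsto (fun s : ℝ => (1 / 2) * Real.log ((2 * s ^ 2 + 1) / (s ^ 2 + 1)))
      (nhdsWithin 0 (Set.Ioi 0)) (nhds 0) := by
  have hcont : ContinuousAt (fun s : ℝ => (1 / 2) * Real.log ((2 * s ^ 2 + 1) / (s ^ 2 + 1))) 0 :=
    continuousAt_const.mul ((continuousAt_log (by norm_num)).comp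
      (continuousAt_id.pow 2 |>.const_mul 2 |>.add continuousAt_const |>.div
        (continuousAt_id.pow 2 |>.add continuousAt_const) (by norm_num)))
  simpa using hcont.tendsto.mono_left nhdsWithin_le_nhds

lemma tendsto_half_log_ratio_atTop :
    Filter.Tendsto (fun s : ℝ => (1 / 2) * Real.log ((2 * s ^ 2 + 1) / (s ^ 2 + 1)))
      Filter.atTop (nhds ((1 / 2) * Real.log 2)) := by
  have hratio : ∀ s : ℝ, (2 * s ^ 2 + 1) / (s ^ 2 + 1) = 2 - (s ^ 2 + 1)⁻¹ := fun s => by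
    field_simp
    ring
  have hinv : Filter.Tendsto (fun s : ℝ => (s ^ 2 + 1)⁻¹) Filter.atTop (nhds 0) :=
    tendsto_inv_atTop_zero.comp
      (Filter.tendsto_atTop_add_const_right _ 1 (Filter.tendsto_pow_atTop two_ne_zero))
  simp only [hratio]
  refine ((continuousAt_log (by norm_num)).tendsto.comp ?_).const_mul (1 / 2)
  simpa using hinv.const_sub (2 : ℝ)

/-- For `y | θ ~ Normal(θ,1)`, `θ ~ Normal(0,σ_p)` with an independent
replication `y_rep` given `θ`, `I(θ, y_rep | y) = (1/2) log((2σ_p² + 1)/(σ_p² + 1))`;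
this quantity is strictly increasing in `σ_p > 0`, tends to `0` as `σ_p → 0⁺`, and tends
to `(1/2) log 2` as `σ_p → ∞`. -/
theorem cmi_normal_location_model :
    (∀ σp : ℝ, 0 < σp →
      cmi11 σp = (1 / 2) * Real.log ((2 * σp ^ 2 + 1) / (σp ^ 2 + 1))) ∧
    StrictMonoOn (fun s : ℝ => (1 / 2) * Real.log ((2 * s ^ 2 + 1) / (s ^ 2 + 1)))
      (Set.Ioi 0) ∧
    Filter.Tendsto (fun s : ℝ => (1 / 2) * Real.log ((2 * s ^ 2 + 1) / (s ^ 2 + 1)))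
      (nhdsWithin 0 (Set.Ioi 0)) (nhds 0) ∧
    Filter.Tendsto (fun s : ℝ => (1 / 2) * Real.log ((2 * s ^ 2 + 1) / (s ^ 2 + 1)))
      Filter.atTop (nhds ((1 / 2) * Real.log 2)) :=
  ⟨fun _ hσp => cmi11_eq hσp, strictMonoOn_half_log_ratio, tendsto_half_log_ratio_nhdsGT_zero,
    tendsto_half_log_ratio_atTop⟩
end
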